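/- Let Θ ⊆ ℝᵐ be a Borel set, G : Θ → ℝⁿ measurable, p ≥ 1, α > 0, and ρ_y a probability measure on ℝⁿ. Suppose F̃ : ℝⁿ → Θ is a measurable map satisfying, for every x ∈ Θ and y ∈ ℝⁿ, ‖G(F̃(y)) − y‖^p + α‖F̃(y)‖^p ≤ ‖G(x) − y‖^p + α‖x‖^p. Then: (i) for every probability measure ρ on Θ and every coupling π ∈ Γ(ρ, ρ_y), ∫ (‖G(F̃(y)) − y‖^p + α‖F̃(y)‖^p) dρ_y(y) ≤ ∫ (‖G(x) − y‖^p + α‖x‖^p) dπ(x,y); and (ii) the measure ((G∘F̃) × id)_# ρ_y is a coupling of G_#(F̃_# ρ_y) and ρ_y whose cost ∫‖u − v‖^p plus α times the p-th moment of F̃_#ρ_y equals the left-hand side of (i). Consequently ρ_x* = F̃_# ρ_y minimizes W_p^p(G_#ρ, ρ_y) + α ∫‖x‖^p dρ over probability measures ρ on Θ. -/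

import Mathlib

/-!
Pointwise optimality of `F̃` integrates against the second marginal of any coupling of `ρ` and
`ρ_y`, which gives (i). The graph of `G ∘ F̃` pushes `ρ_y` to a coupling of `G_#(F̃_#ρ_y)` and
`ρ_y` whose cost is exactly the left side of (i), which gives (ii). For the minimality statement,
any coupling of `G_#ρ` and `ρ_y` lifts through `G × id` to a coupling of `ρ` and `ρ_y`: disintegrate
it over its first marginal and compose the conditional kernel with `G`. Applying (i) to the lift
bounds the value at `F̃_#ρ_y` by the transport cost plus the regularization term of `ρ`.
-/

open MeasureTheory Real
open scoped ENNReal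

/-- `cpl` is a coupling of `μ` and `ν`: a measure on the product whose marginals
are `μ` and `ν`. -/
def IsCoupling {X Y : Type*} [MeasurableSpace X] [MeasurableSpace Y]
    (μ : Measure X) (ν : Measure Y) (cpl : Measure (X × Y)) : Prop :=
  cpl.map Prod.fst = μ ∧ cpl.map Prod.snd = ν

open ProbabilityTheory

section

variable {X Y Z : Type*} [MeasurableSpace X] [MeasurableSpace Y] [MeasurableSpace Z]

theorem MeasureTheory.Measure.map_prodMap_compProd_comap (μ : Measure X) [SFinite μ]
    (κ : Kernel Z Y) [IsSFiniteKernel κ] {f : X → Z} (hf : Measurable f) :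
    (μ ⊗ₘ κ.comap f hf).map (Prod.map f id) = μ.map f ⊗ₘ κ := by
  ext s hs
  rw [Measure.map_apply (hf.prodMap measurable_id) hs, Measure.compProd_apply hs,
    Measure.compProd_apply (hf.prodMap measurable_id hs),
    lintegral_map (Kernel.measurable_kernel_prodMk_left hs) hf]
  rfl

theorem isCoupling_map_graph {f : Y → Z} (hf : Measurable f) (ν : Measure Y) :
    IsCoupling (ν.map f) ν (ν.map fun y => (f y, y)) := by
  have hgraph : Measurable fun y => (f y, y) := hf.prodMk measurable_id
  constructor
  · rw [Measure.map_map measurable_fst hgraph]; rfl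
  · rw [Measure.map_map measurable_snd hgraph]; exact Measure.map_id

namespace IsCoupling

variable {ρ : Measure X} {ν : Measure Y}

theorem isProbabilityMeasure {cpl : Measure (X × Y)} (hcpl : IsCoupling ρ ν cpl)
    [IsProbabilityMeasure ρ] : IsProbabilityMeasure cpl := by
  have : IsProbabilityMeasure (cpl.map Prod.fst) := hcpl.1 ▸ ‹_›
  exact Measure.isProbabilityMeasure_of_map Prod.fst

theorem lintegral_le {cpl : Measure (X × Y)} (hcpl : IsCoupling ρ ν cpl) {Θ : Set X}
    (hρΘ : ρ Θᶜ = 0) {L : Y → ℝ≥0∞} (hL : Measurable L) {Φ : X × Y → ℝ≥0∞}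
    (hLΦ : ∀ x ∈ Θ, ∀ y, L y ≤ Φ (x, y)) :
    ∫⁻ y, L y ∂ν ≤ ∫⁻ z, Φ z ∂cpl := by
  have hΘ_ae : ∀ᵐ z ∂cpl, z.1 ∈ Θ :=
    ae_of_ae_map measurable_fst.aemeasurable (hcpl.1 ▸ ae_iff.mpr hρΘ)
  rw [← hcpl.2, lintegral_map hL measurable_snd]
  exact lintegral_mono_ae (hΘ_ae.mono fun z hz => hLΦ z.1 hz z.2)

theorem exists_map_prodMap_eq [StandardBorelSpace Y] [IsProbabilityMeasure ρ] {G : X → Z}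
    (hG : Measurable G) {cpl : Measure (Z × Y)} (hcpl : IsCoupling (ρ.map G) ν cpl) :
    ∃ η : Measure (X × Y), IsCoupling ρ ν η ∧ η.map (Prod.map G id) = cpl := by
  have := Measure.isProbabilityMeasure_map (μ := ρ) hG.aemeasurable
  have := hcpl.isProbabilityMeasure
  have : Nonempty Y := (nonempty_of_isProbabilityMeasure cpl).map Prod.snd
  have hη : (ρ ⊗ₘ cpl.condKernel.comap G hG).map (Prod.map G id) = cpl := by
    rw [Measure.map_prodMap_compProd_comap _ _ hG, ← hcpl.1]
    exact cpl.disintegrate _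
  refine ⟨ρ ⊗ₘ cpl.condKernel.comap G hG, ⟨Measure.fst_compProd _ _, ?_⟩, hη⟩
  conv_rhs => rw [← hcpl.2, ← hη, Measure.map_map measurable_snd (hG.prodMap measurable_id)]
  rfl

theorem lintegral_le_lintegral_add [StandardBorelSpace Y] [IsProbabilityMeasure ρ] {G : X → Z}
    (hG : Measurable G) {cpl : Measure (Z × Y)} (hcpl : IsCoupling (ρ.map G) ν cpl)
    {Θ : Set X} (hρΘ : ρ Θᶜ = 0) {L : Y → ℝ≥0∞} (hL : Measurable L) {c : Z × Y → ℝ≥0∞}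
    (hc : Measurable c) {R : X → ℝ≥0∞} (hR : Measurable R)
    (hLcR : ∀ x ∈ Θ, ∀ y, L y ≤ c (G x, y) + R x) :
    ∫⁻ y, L y ∂ν ≤ ∫⁻ z, c z ∂cpl + ∫⁻ x, R x ∂ρ := by
  obtain ⟨η, hη, hηG⟩ := hcpl.exists_map_prodMap_eq hG
  have hGid : Measurable (Prod.map G (id : Y → Y)) := hG.prodMap measurable_id
  calc ∫⁻ y, L y ∂ν ≤ ∫⁻ w, c (Prod.map G id w) + R w.1 ∂η := hη.lintegral_le hρΘ hL hLcR
    _ = ∫⁻ w, c (Prod.map G id w) ∂η + ∫⁻ w, R w.1 ∂η := lintegral_add_left (hc.comp hGid) _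
    _ = ∫⁻ z, c z ∂cpl + ∫⁻ x, R x ∂ρ := by
      rw [← lintegral_map hc hGid, hηG, ← lintegral_map hR measurable_fst, hη.1]

end IsCoupling

end

theorem stmt_9_general {m n : ℕ} (Θ : Set (EuclideanSpace ℝ (Fin m)))
    (G : EuclideanSpace ℝ (Fin m) → EuclideanSpace ℝ (Fin n)) (hG : Measurable G)
    (p : ℝ) (α : ℝ) (hα : 0 < α)
    (ρy : Measure (EuclideanSpace ℝ (Fin n))) [IsProbabilityMeasure ρy]
    (Ft : EuclideanSpace ℝ (Fin n) → EuclideanSpace ℝ (Fin m))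
    (hFt : Measurable Ft)
    (hmin : ∀ x ∈ Θ, ∀ y, ‖G (Ft y) - y‖ ^ p + α * ‖Ft y‖ ^ p ≤
      ‖G x - y‖ ^ p + α * ‖x‖ ^ p) :
    (∀ ρ : Measure (EuclideanSpace ℝ (Fin m)), IsProbabilityMeasure ρ → ρ Θᶜ = 0 →
      ∀ cpl : Measure (EuclideanSpace ℝ (Fin m) × EuclideanSpace ℝ (Fin n)),
        IsCoupling ρ ρy cpl →
        ∫⁻ y, ENNReal.ofReal (‖G (Ft y) - y‖ ^ p + α * ‖Ft y‖ ^ p) ∂ρy ≤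
          ∫⁻ z, ENNReal.ofReal (‖G z.1 - z.2‖ ^ p + α * ‖z.1‖ ^ p) ∂cpl) ∧
    (IsCoupling ((ρy.map Ft).map G) ρy (ρy.map fun y => (G (Ft y), y)) ∧
      (∫⁻ z, ENNReal.ofReal (‖z.1 - z.2‖ ^ p) ∂(ρy.map fun y => (G (Ft y), y))) +
        (∫⁻ x, ENNReal.ofReal (α * ‖x‖ ^ p) ∂(ρy.map Ft)) =
        ∫⁻ y, ENNReal.ofReal (‖G (Ft y) - y‖ ^ p + α * ‖Ft y‖ ^ p) ∂ρy) ∧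
    (∀ ρ : Measure (EuclideanSpace ℝ (Fin m)), IsProbabilityMeasure ρ → ρ Θᶜ = 0 →
      (⨅ (cpl : Measure (EuclideanSpace ℝ (Fin n) × EuclideanSpace ℝ (Fin n)))
        (_ : IsCoupling ((ρy.map Ft).map G) ρy cpl),
        ∫⁻ z, ENNReal.ofReal (‖z.1 - z.2‖ ^ p) ∂cpl) +
        (∫⁻ x, ENNReal.ofReal (α * ‖x‖ ^ p) ∂(ρy.map Ft)) ≤
      (⨅ (cpl : Measure (EuclideanSpace ℝ (Fin n) × EuclideanSpace ℝ (Fin n)))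
        (_ : IsCoupling (ρ.map G) ρy cpl),
        ∫⁻ z, ENNReal.ofReal (‖z.1 - z.2‖ ^ p) ∂cpl) +
        ∫⁻ x, ENNReal.ofReal (α * ‖x‖ ^ p) ∂ρ) := by
  have hgraph : Measurable fun y => (G (Ft y), y) := (hG.comp hFt).prodMk measurable_id
  have hsplit : ∀ u y : EuclideanSpace ℝ (Fin n), ∀ x : EuclideanSpace ℝ (Fin m),
      ENNReal.ofReal (‖u - y‖ ^ p + α * ‖x‖ ^ p) =
        ENNReal.ofReal (‖u - y‖ ^ p) + ENNReal.ofReal (α * ‖x‖ ^ p) := fun u y x =>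
    ENNReal.ofReal_add (by positivity) (by positivity)
  have hcoupling : IsCoupling ((ρy.map Ft).map G) ρy (ρy.map fun y => (G (Ft y), y)) := by
    rw [Measure.map_map hG hFt]
    exact isCoupling_map_graph (hG.comp hFt) ρy
  have hcost : (∫⁻ z, ENNReal.ofReal (‖z.1 - z.2‖ ^ p) ∂(ρy.map fun y => (G (Ft y), y))) +
      (∫⁻ x, ENNReal.ofReal (α * ‖x‖ ^ p) ∂(ρy.map Ft)) =
      ∫⁻ y, ENNReal.ofReal (‖G (Ft y) - y‖ ^ p + α * ‖Ft y‖ ^ p) ∂ρy := by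
    rw [lintegral_map (by fun_prop) hgraph, lintegral_map (by fun_prop) hFt,
      ← lintegral_add_left (by fun_prop)]
    simp only [hsplit]
  refine ⟨fun ρ _ hρΘ cpl hcpl => hcpl.lintegral_le hρΘ (by fun_prop)
    fun x hx y => ENNReal.ofReal_le_ofReal (hmin x hx y), ⟨hcoupling, hcost⟩, fun ρ _ hρΘ => ?_⟩
  calc _ ≤ (∫⁻ z, ENNReal.ofReal (‖z.1 - z.2‖ ^ p) ∂(ρy.map fun y => (G (Ft y), y))) +
        (∫⁻ x, ENNReal.ofReal (α * ‖x‖ ^ p) ∂(ρy.map Ft)) :=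
      add_le_add_left (iInf₂_le _ hcoupling) _
    _ = ∫⁻ y, ENNReal.ofReal (‖G (Ft y) - y‖ ^ p + α * ‖Ft y‖ ^ p) ∂ρy := hcost
    _ ≤ _ := by
      simp only [ENNReal.iInf_add]
      refine le_iInf₂ fun cpl hcpl => hcpl.lintegral_le_lintegral_add hG hρΘ (by fun_prop)
        (by fun_prop) (by fun_prop) fun x hx y => ?_
      exact (ENNReal.ofReal_le_ofReal (hmin x hx y)).trans_eq (hsplit _ _ _)

/-- Let `Θ ⊆ ℝᵐ` be Borel, `G` measurable, `p ≥ 1`, `α > 0`, and `F̃`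
a measurable map with `‖G (F̃ y) - y‖^p + α‖F̃ y‖^p ≤ ‖G x - y‖^p + α‖x‖^p` for all
`x ∈ Θ`, `y`. Then: (i) for every probability measure `ρ` on `Θ` and coupling
`π ∈ Γ(ρ, ρy)`, `∫ (‖G(F̃ y) - y‖^p + α‖F̃ y‖^p) dρy ≤ ∫ (‖G x - y‖^p + α‖x‖^p) dπ`;
(ii) `((G∘F̃) × id)_#ρy` is a coupling of `G_#(F̃_#ρy)` and `ρy` whose cost plus `α`
times the `p`-th moment of `F̃_#ρy` equals the left side of (i). Consequently `F̃_#ρy`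
minimizes `W_p^p(G_#ρ, ρy) + α ∫‖x‖^p dρ`. -/
theorem stmt_9 {m n : ℕ} (Θ : Set (EuclideanSpace ℝ (Fin m))) (hΘ : MeasurableSet Θ)
    (G : EuclideanSpace ℝ (Fin m) → EuclideanSpace ℝ (Fin n)) (hG : Measurable G)
    (p : ℝ) (hp : 1 ≤ p) (α : ℝ) (hα : 0 < α)
    (ρy : Measure (EuclideanSpace ℝ (Fin n))) [IsProbabilityMeasure ρy]
    (Ft : EuclideanSpace ℝ (Fin n) → EuclideanSpace ℝ (Fin m))
    (hFt : Measurable Ft) (hFtΘ : ∀ y, Ft y ∈ Θ)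
    (hmin : ∀ x ∈ Θ, ∀ y, ‖G (Ft y) - y‖ ^ p + α * ‖Ft y‖ ^ p ≤
      ‖G x - y‖ ^ p + α * ‖x‖ ^ p) :
    (∀ ρ : Measure (EuclideanSpace ℝ (Fin m)), IsProbabilityMeasure ρ → ρ Θᶜ = 0 →
      ∀ cpl : Measure (EuclideanSpace ℝ (Fin m) × EuclideanSpace ℝ (Fin n)),
        IsCoupling ρ ρy cpl →
        ∫⁻ y, ENNReal.ofReal (‖G (Ft y) - y‖ ^ p + α * ‖Ft y‖ ^ p) ∂ρy ≤
          ∫⁻ z, ENNReal.ofReal (‖G z.1 - z.2‖ ^ p + α * ‖z.1‖ ^ p) ∂cpl) ∧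
    (IsCoupling ((ρy.map Ft).map G) ρy (ρy.map fun y => (G (Ft y), y)) ∧
      (∫⁻ z, ENNReal.ofReal (‖z.1 - z.2‖ ^ p) ∂(ρy.map fun y => (G (Ft y), y))) +
        (∫⁻ x, ENNReal.ofReal (α * ‖x‖ ^ p) ∂(ρy.map Ft)) =
        ∫⁻ y, ENNReal.ofReal (‖G (Ft y) - y‖ ^ p + α * ‖Ft y‖ ^ p) ∂ρy) ∧
    (∀ ρ : Measure (EuclideanSpace ℝ (Fin m)), IsProbabilityMeasure ρ → ρ Θᶜ = 0 →
      (⨅ (cpl : Measure (EuclideanSpace ℝ (Fin n) × EuclideanSpace ℝ (Fin n)))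
        (_ : IsCoupling ((ρy.map Ft).map G) ρy cpl),
        ∫⁻ z, ENNReal.ofReal (‖z.1 - z.2‖ ^ p) ∂cpl) +
        (∫⁻ x, ENNReal.ofReal (α * ‖x‖ ^ p) ∂(ρy.map Ft)) ≤
      (⨅ (cpl : Measure (EuclideanSpace ℝ (Fin n) × EuclideanSpace ℝ (Fin n)))
        (_ : IsCoupling (ρ.map G) ρy cpl),
        ∫⁻ z, ENNReal.ofReal (‖z.1 - z.2‖ ^ p) ∂cpl) +
        ∫⁻ x, ENNReal.ofReal (α * ‖x‖ ^ p) ∂ρ) :=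
  stmt_9_general Θ G hG p α hα ρy Ft hFt hmin
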